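/- For every integer p ≥ 1 and every θ ∈ (0,π), the function t ↦ C_p(t)² / (M_p(t)·B_p(t)) is differentiable at θ and its derivative at θ is strictly positive; in particular this function is strictly increasing on (0,π). -/

import Mathlib

/-- `B_p(θ) = -(2-2cos θ)^{p+1} · ∑_{j∈ℤ} (θ+2πj)^{-2p}`. -/
noncomputable def Bp (p : ℕ) (θ : ℝ) : ℝ :=
  -(2 - 2 * Real.cos θ) ^ (p + 1) *
    ∑' j : ℤ, ((θ + 2 * Real.pi * (j : ℝ)) ^ (2 * p))⁻¹

/-- `C_p(θ) = -(2-2cos θ)^{p+1} · ∑_{j∈ℤ} (θ+2πj)^{-(2p+1)}`. -/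
noncomputable def Cp (p : ℕ) (θ : ℝ) : ℝ :=
  -(2 - 2 * Real.cos θ) ^ (p + 1) *
    ∑' j : ℤ, ((θ + 2 * Real.pi * (j : ℝ)) ^ (2 * p + 1))⁻¹

/-- `M_p(θ) = (2-2cos θ)^{p+1} · ∑_{j∈ℤ} (θ+2πj)^{-(2p+2)}`. -/
noncomputable def Mp (p : ℕ) (θ : ℝ) : ℝ :=
  (2 - 2 * Real.cos θ) ^ (p + 1) *
    ∑' j : ℤ, ((θ + 2 * Real.pi * (j : ℝ)) ^ (2 * p + 2))⁻¹

-- Auxiliary development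


open Real Set

noncomputable def Sk (k : ℕ) (t : ℝ) : ℝ := ∑' j : ℤ, ((t + 2 * Real.pi * (j : ℝ)) ^ k)⁻¹

lemma base_summable (k : ℕ) (hk : 2 ≤ k) :
    Summable fun j : ℤ => (((1 : ℝ) + |(j : ℝ)|) ^ k)⁻¹ := by
  have hnat : Summable fun n : ℕ => (((1 : ℝ) + (n : ℝ)) ^ k)⁻¹ := by
    have h0 : Summable fun n : ℕ => ((n : ℝ) ^ k)⁻¹ := by
      simpa [one_div] using (Real.summable_one_div_nat_pow (p := k)).2 hk
    have := (summable_nat_add_iff (f := fun n : ℕ => ((n : ℝ) ^ k)⁻¹) 1).2 h0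
    refine this.congr fun n => ?_
    push_cast; ring_nf
  apply Summable.of_nat_of_neg <;>
  · refine hnat.congr fun n => ?_
    push_cast [abs_of_nonneg, Int.cast_natCast]
    simp [abs_of_nonneg (by positivity : (0:ℝ) ≤ (n:ℝ))]

lemma abs_lb {θ : ℝ} (hθ1 : 0 < θ) (hθ2 : θ < Real.pi) {t : ℝ}
    (ht : t ∈ Set.Ioo (θ / 2) Real.pi) (j : ℤ) :
    θ / 8 * (1 + |(j : ℝ)|) ≤ |t + 2 * Real.pi * (j : ℝ)| := by
  obtain ⟨ht1, ht2⟩ := ht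
  have hpi := Real.pi_gt_three
  rcases lt_trichotomy j 0 with hj | hj | hj
  · have hj' : j ≤ -1 := by omega
    have hj1 : (j : ℝ) ≤ -1 := by exact_mod_cast hj'
    have habs : |(j : ℝ)| = -(j : ℝ) := abs_of_neg (by linarith)
    have h2 : t + 2 * Real.pi * (j : ℝ) < 0 := by nlinarith
    rw [abs_of_neg h2, habs]
    nlinarith
  · subst hj
    simp only [Int.cast_zero, abs_zero, mul_zero, add_zero]
    rw [abs_of_pos (by linarith)]
    linarith
  · have hj1 : (1 : ℝ) ≤ (j : ℝ) := by exact_mod_cast hj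
    have habs : |(j : ℝ)| = (j : ℝ) := abs_of_pos (by linarith)
    have h2 : 0 < t + 2 * Real.pi * (j : ℝ) := by nlinarith
    rw [abs_of_pos h2, habs]
    nlinarith

lemma summable_abs_aux {θ : ℝ} (hθ1 : 0 < θ) (hθ2 : θ < Real.pi) {t : ℝ}
    (ht : t ∈ Set.Ioo (θ / 2) Real.pi) (k : ℕ) (hk : 2 ≤ k) :
    Summable fun j : ℤ => |((t + 2 * Real.pi * (j : ℝ)) ^ k)⁻¹| := by
  have hb := base_summable k hk
  refine Summable.of_nonneg_of_le (fun j => abs_nonneg _) (fun j => ?_)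
    ((hb.mul_left ((θ/8) ^ k)⁻¹))
  have h1 := abs_lb hθ1 hθ2 ht j
  have hpos : (0:ℝ) < θ / 8 * (1 + |(j : ℝ)|) := by positivity
  rw [abs_inv, abs_pow]
  have h2 : (θ/8) ^ k * (1 + |(j:ℝ)|) ^ k ≤ |t + 2 * Real.pi * (j : ℝ)| ^ k := by
    calc (θ/8) ^ k * (1 + |(j:ℝ)|) ^ k = (θ/8 * (1 + |(j:ℝ)|)) ^ k := by rw [mul_pow]
    _ ≤ _ := pow_le_pow_left₀ hpos.le h1 k
  have h3 : (0:ℝ) < (θ/8) ^ k * (1 + |(j:ℝ)|) ^ k := by positivity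
  calc (|t + 2 * Real.pi * (j : ℝ)| ^ k)⁻¹ ≤ ((θ/8) ^ k * (1 + |(j:ℝ)|) ^ k)⁻¹ :=
        inv_anti₀ h3 h2
    _ = ((θ/8) ^ k)⁻¹ * ((1 + |(j:ℝ)|) ^ k)⁻¹ := by rw [mul_inv]

lemma summable_aux {θ : ℝ} (hθ1 : 0 < θ) (hθ2 : θ < Real.pi) {t : ℝ}
    (ht : t ∈ Set.Ioo (θ / 2) Real.pi) (k : ℕ) (hk : 2 ≤ k) :
    Summable fun j : ℤ => ((t + 2 * Real.pi * (j : ℝ)) ^ k)⁻¹ :=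
  (summable_abs_aux hθ1 hθ2 ht k hk).of_abs

lemma self_mem {θ : ℝ} (hθ1 : 0 < θ) (hθ2 : θ < Real.pi) : θ ∈ Set.Ioo (θ / 2) Real.pi :=
  ⟨by linarith, hθ2⟩

lemma xv_ne {t : ℝ} (ht : t ∈ Set.Ioo (0:ℝ) Real.pi) (j : ℤ) :
    t + 2 * Real.pi * (j : ℝ) ≠ 0 := by
  obtain ⟨ht1, ht2⟩ := ht
  have hpi := Real.pi_gt_three
  rcases le_or_gt 0 j with hj | hj
  · have : (0:ℝ) ≤ (j:ℝ) := by exact_mod_cast hj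
    positivity
  · have hj' : j ≤ -1 := by omega
    have hj1 : (j : ℝ) ≤ -1 := by exact_mod_cast hj'
    nlinarith

lemma hasDerivAt_term {t : ℝ} (c : ℝ) (hne : t + c ≠ 0) (k : ℕ) (hk : 2 ≤ k) :
    HasDerivAt (fun y : ℝ => ((y + c) ^ k)⁻¹) (-(k : ℝ) * (((t + c) ^ (k + 1))⁻¹)) t := by
  have h1 : HasDerivAt (fun y : ℝ => y + c) 1 t := (hasDerivAt_id t).add_const c
  have h2 : HasDerivAt (fun y : ℝ => (y + c) ^ k) ((k : ℝ) * (t + c) ^ (k - 1) * 1) t := h1.pow k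
  have h3 := h2.inv (pow_ne_zero k hne)
  refine h3.congr_deriv ?_
  symm
  have hpow : ((t + c) ^ k) ^ 2 = (t + c) ^ (k - 1) * (t + c) ^ (k + 1) := by
    rw [← pow_mul, ← pow_add]
    congr 1
    omega
  field_simp
  rw [hpow]
  ring

lemma hasDerivAt_Sk {θ : ℝ} (hθ1 : 0 < θ) (hθ2 : θ < Real.pi) (k : ℕ) (hk : 2 ≤ k) :
    HasDerivAt (Sk k) (-(k : ℝ) * Sk (k + 1) θ) θ := by
  have hmem := self_mem hθ1 hθ2
  have hopen : IsOpen (Set.Ioo (θ / 2) Real.pi) := isOpen_Ioo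
  have hconn : IsPreconnected (Set.Ioo (θ / 2) Real.pi) := (convex_Ioo _ _).isPreconnected
  have hu : Summable fun j : ℤ => (k : ℝ) * ((θ / 8 * (1 + |(j : ℝ)|)) ^ (k + 1))⁻¹ := by
    apply Summable.mul_left
    refine ((base_summable (k+1) (by omega)).mul_left ((θ/8) ^ (k+1))⁻¹).congr fun j => ?_
    rw [mul_pow, mul_inv]
  have key : HasDerivAt (fun z => ∑' j : ℤ, ((z + 2 * Real.pi * (j : ℝ)) ^ k)⁻¹)
      (∑' j : ℤ, -(k : ℝ) * ((θ + 2 * Real.pi * (j : ℝ)) ^ (k + 1))⁻¹) θ := by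
    refine hasDerivAt_tsum_of_isPreconnected hu hopen hconn
      (fun j y hy => hasDerivAt_term _ ?_ k hk) (fun j y hy => ?_) hmem ?_ hmem
    · have := abs_lb hθ1 hθ2 hy j
      intro h0
      rw [h0, abs_zero] at this
      nlinarith [abs_nonneg (j:ℝ)]
    · have h1 := abs_lb hθ1 hθ2 hy j
      have hpos : (0:ℝ) < θ / 8 * (1 + |(j : ℝ)|) := by positivity
      rw [norm_mul, norm_neg, norm_inv, norm_pow, Real.norm_natCast, Real.norm_eq_abs]
      have h2 : (θ / 8 * (1 + |(j : ℝ)|)) ^ (k+1) ≤ |y + 2 * Real.pi * (j : ℝ)| ^ (k+1) :=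
        pow_le_pow_left₀ hpos.le h1 _
      exact mul_le_mul_of_nonneg_left (inv_anti₀ (by positivity) h2) (Nat.cast_nonneg k)
    · exact summable_aux hθ1 hθ2 hmem k hk
  have : (∑' j : ℤ, -(k : ℝ) * ((θ + 2 * Real.pi * (j : ℝ)) ^ (k + 1))⁻¹)
      = -(k : ℝ) * Sk (k + 1) θ := by
    rw [Sk, tsum_mul_left]
  rw [← this]
  exact key

lemma term_even_nonneg (t : ℝ) (m : ℕ) (j : ℤ) :
    0 ≤ ((t + 2 * Real.pi * (j : ℝ)) ^ (2 * m))⁻¹ := by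
  rw [pow_mul]
  positivity

lemma Sk_even_pos {θ : ℝ} (hθ1 : 0 < θ) (hθ2 : θ < Real.pi) (m : ℕ) (hm : 1 ≤ m) :
    0 < Sk (2 * m) θ := by
  refine Summable.tsum_pos (summable_aux hθ1 hθ2 (self_mem hθ1 hθ2) (2*m) (by omega))
    (term_even_nonneg θ m) 0 ?_
  have : θ + 2 * Real.pi * ((0:ℤ) : ℝ) = θ := by push_cast; ring
  rw [this]
  positivity

lemma Sk_odd_pos {θ : ℝ} (hθ1 : 0 < θ) (hθ2 : θ < Real.pi) (q : ℕ) (hq : 1 ≤ q) :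
    0 < Sk (2 * q + 1) θ := by
  show 0 < ∑' j : ℤ, ((θ + 2 * Real.pi * (j : ℝ)) ^ (2 * q + 1))⁻¹
  set f : ℤ → ℝ := fun j => ((θ + 2 * Real.pi * (j : ℝ)) ^ (2 * q + 1))⁻¹ with hf
  have hsum : Summable f := summable_aux hθ1 hθ2 (self_mem hθ1 hθ2) _ (by omega)
  have hpi := Real.pi_gt_three
  have hpair : ∀ j : ℤ, 0 ≤ j → 0 < f j + f (-1 - j) := by
    intro j hj
    have hjr : (0:ℝ) ≤ (j:ℝ) := by exact_mod_cast hj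
    set u : ℝ := θ + 2 * Real.pi * (j : ℝ) with hu
    set v : ℝ := 2 * Real.pi * ((j:ℝ) + 1) - θ with hv
    have hu0 : 0 < u := by positivity
    have hv0 : 0 < v := by nlinarith
    have huv : u < v := by simp only [hu, hv]; nlinarith
    have hx : θ + 2 * Real.pi * (((-1 - j : ℤ)) : ℝ) = -v := by push_cast; ring
    have hfv : f (-1 - j) = -((v ^ (2 * q + 1))⁻¹) := by
      rw [hf]
      simp only [hx]
      rw [Odd.neg_pow ⟨q, by ring⟩, inv_neg]
    have hfu : f j = (u ^ (2 * q + 1))⁻¹ := rfl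
    rw [hfu, hfv]
    have h1 : u ^ (2*q+1) < v ^ (2*q+1) := pow_lt_pow_left₀ huv hu0.le (by omega)
    have h2 : (v ^ (2*q+1))⁻¹ < (u ^ (2*q+1))⁻¹ := by
      apply inv_strictAnti₀ (by positivity) h1
    linarith
  have hpair' : ∀ j : ℤ, 0 < f j + f (-1 - j) := by
    intro j
    rcases le_or_gt 0 j with hj | hj
    · exact hpair j hj
    · have := hpair (-1 - j) (by omega)
      have hswap : (-1 - (-1 - j)) = j := by ring
      rw [hswap] at this
      linarith
  have e : ℤ ≃ ℤ := Equiv.subLeft (-1)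
  have htau : ∑' j : ℤ, f (-1 - j) = ∑' j, f j := by
    have h := (Equiv.subLeft (-1 : ℤ)).tsum_eq f
    simpa only [Equiv.subLeft_apply] using h
  have hsum2 : Summable fun j : ℤ => f (-1 - j) := by
    have h := ((Equiv.subLeft (-1 : ℤ)).summable_iff (f := f)).2 hsum
    simpa only [Function.comp_def, Equiv.subLeft_apply] using h
  have hadd : ∑' j : ℤ, (f j + f (-1 - j)) = (∑' j, f j) + ∑' j, f j := by
    rw [Summable.tsum_add hsum hsum2, htau]
  have hpos : 0 < ∑' j : ℤ, (f j + f (-1 - j)) :=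
    Summable.tsum_pos (hsum.add hsum2) (fun j => (hpair' j).le) 0 (hpair' 0)
  rw [hadd] at hpos
  linarith

lemma core_le {d1 d2 q1 q2 : ℝ} (K : ℕ) (hd1 : 0 ≤ d1) (hd : d1 ≤ d2) (hq2 : 0 < q2)
    (hq : q2 ≤ q1) : d1 ^ 2 * (q1 ^ K)⁻¹ ≤ d2 ^ 2 * (q2 ^ K)⁻¹ := by
  have h1 : d1 ^ 2 ≤ d2 ^ 2 := by nlinarith
  have h2 : q2 ^ K ≤ q1 ^ K := pow_le_pow_left₀ hq2.le hq K
  have h3 : (q1 ^ K)⁻¹ ≤ (q2 ^ K)⁻¹ := inv_anti₀ (by positivity) h2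
  have h4 : (0:ℝ) ≤ (q1 ^ K)⁻¹ := by
    have : (0:ℝ) < q1 ^ K := pow_pos (lt_of_lt_of_le hq2 hq) K
    positivity
  exact mul_le_mul h1 h3 h4 (by positivity)

lemma core_lt {d q1 q2 : ℝ} (K : ℕ) (hK : K ≠ 0) (hd : 0 < d) (hq2 : 0 < q2)
    (hq : q2 < q1) : d ^ 2 * (q1 ^ K)⁻¹ < d ^ 2 * (q2 ^ K)⁻¹ := by
  have h2 : q2 ^ K < q1 ^ K := pow_lt_pow_left₀ hq hq2.le hK
  have h3 : (q1 ^ K)⁻¹ < (q2 ^ K)⁻¹ := inv_strictAnti₀ (by positivity) h2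
  exact mul_lt_mul_of_pos_left h3 (by positivity)

lemma id_cs (p : ℕ) {xi xj : ℝ} (hxi : xi ≠ 0) (hxj : xj ≠ 0) :
    (xi ^ (2*p))⁻¹ * (xj ^ (2*p+2))⁻¹ + (xj ^ (2*p))⁻¹ * (xi ^ (2*p+2))⁻¹
      - 2 * ((xi ^ (2*p+1))⁻¹ * (xj ^ (2*p+1))⁻¹)
    = ((xi ^ p * xj ^ (p+1))⁻¹ - (xj ^ p * xi ^ (p+1))⁻¹) ^ 2 := by
  field_simp
  ring

lemma id_bd (p : ℕ) {xi xj : ℝ} (hxi : xi ≠ 0) (hxj : xj ≠ 0) :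
    2 * ((xi ^ (2*p+2))⁻¹ * (xj ^ (2*p+2))⁻¹) - (xi ^ (2*p+1))⁻¹ * (xj ^ (2*p+3))⁻¹
      - (xj ^ (2*p+1))⁻¹ * (xi ^ (2*p+3))⁻¹
    = -((xi - xj) ^ 2 * (((xi * xj) ^ (2*p+3))⁻¹)) := by
  field_simp
  ring

def sig (z : ℤ × ℤ) : ℤ × ℤ :=
  if 0 ≤ z.1 ∧ (z.1 < z.2 ∨ z.1 < -z.2) then (z.1, -z.2)
  else if 0 ≤ z.2 ∧ (z.2 < z.1 ∨ z.2 < -z.1) then (-z.1, z.2)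
  else if z.2 ≤ -1 ∧ (z.1 < z.2 ∨ -z.2 ≤ z.1) then (-1 - z.1, z.2)
  else if z.1 ≤ -1 ∧ (z.2 < z.1 ∨ -z.1 ≤ z.2) then (z.1, -1 - z.2)
  else z

lemma sig_apply (i j : ℤ) : sig (i, j) =
    (if 0 ≤ i ∧ (i < j ∨ i < -j) then (i, -j)
     else if 0 ≤ j ∧ (j < i ∨ j < -i) then (-i, j)
     else if j ≤ -1 ∧ (i < j ∨ -j ≤ i) then (-1 - i, j)
     else if i ≤ -1 ∧ (j < i ∨ -i ≤ j) then (i, -1 - j)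
     else (i, j)) := rfl

lemma sig_sig (z : ℤ × ℤ) : sig (sig z) = z := by
  rcases z with ⟨i, j⟩
  rw [sig_apply i j]
  split_ifs with h1 h2 h3 h4 <;>
    [rw [sig_apply i (-j)]; rw [sig_apply (-i) j]; rw [sig_apply (-1-i) j];
     rw [sig_apply i (-1-j)]; rw [sig_apply i j]] <;>
    split_ifs <;>
    first
      | rfl
      | (rw [Prod.mk.injEq]; omega)

noncomputable def sigE : ℤ × ℤ ≃ ℤ × ℤ :=
  ⟨sig, sig, fun z => sig_sig z, fun z => sig_sig z⟩

lemma sig_diag {z : ℤ × ℤ}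
    (h1 : ¬(0 ≤ z.1 ∧ (z.1 < z.2 ∨ z.1 < -z.2)))
    (h2 : ¬(0 ≤ z.2 ∧ (z.2 < z.1 ∨ z.2 < -z.1)))
    (h3 : ¬(z.2 ≤ -1 ∧ (z.1 < z.2 ∨ -z.2 ≤ z.1)))
    (h4 : ¬(z.1 ≤ -1 ∧ (z.2 < z.1 ∨ -z.1 ≤ z.2))) : z.1 = z.2 := by
  omega

noncomputable def xt (θ : ℝ) (j : ℤ) : ℝ := θ + 2 * Real.pi * (j : ℝ)

noncomputable def Gf (θ : ℝ) (p : ℕ) (z : ℤ × ℤ) : ℝ :=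
  2 * ((xt θ z.1 ^ (2*p+2))⁻¹ * (xt θ z.2 ^ (2*p+2))⁻¹)
    - (xt θ z.1 ^ (2*p+1))⁻¹ * (xt θ z.2 ^ (2*p+3))⁻¹
    - (xt θ z.2 ^ (2*p+1))⁻¹ * (xt θ z.1 ^ (2*p+3))⁻¹

lemma xt_ne {θ : ℝ} (hθ : θ ∈ Set.Ioo (0:ℝ) Real.pi) (j : ℤ) : xt θ j ≠ 0 :=
  xv_ne hθ j

lemma Gf_eq {θ : ℝ} (hθ : θ ∈ Set.Ioo (0:ℝ) Real.pi) (p : ℕ) (z : ℤ × ℤ) :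
    Gf θ p z = -((xt θ z.1 - xt θ z.2) ^ 2 * (((xt θ z.1 * xt θ z.2) ^ (2*p+3))⁻¹)) :=
  id_bd p (xt_ne hθ z.1) (xt_ne hθ z.2)

lemma Gf_swap (θ : ℝ) (p : ℕ) (i j : ℤ) : Gf θ p (j, i) = Gf θ p (i, j) := by
  unfold Gf
  dsimp only
  ring

lemma lemA {θ : ℝ} (hθ : θ ∈ Set.Ioo (0:ℝ) Real.pi) (p : ℕ) (i j : ℤ)
    (h0 : 0 ≤ i) (hij : i < j) : 0 ≤ Gf θ p (i, j) + Gf θ p (i, -j) := by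
  obtain ⟨hθ1, hθ2⟩ := hθ
  have hπ := Real.pi_gt_three
  have hi : (0:ℝ) ≤ (i:ℝ) := by exact_mod_cast h0
  have hij' : (i:ℝ) + 1 ≤ (j:ℝ) := by exact_mod_cast hij
  have hodd : Odd (2*p+3) := ⟨p+1, by ring⟩
  rw [Gf_eq ⟨hθ1, hθ2⟩, Gf_eq ⟨hθ1, hθ2⟩]
  dsimp only
  have e2 : xt θ i * xt θ (-j) = -(xt θ i * (2 * Real.pi * (j:ℝ) - θ)) := by
    unfold xt; push_cast; ring
  rw [e2, Odd.neg_pow hodd, inv_neg]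
  have exi : xt θ i = θ + 2 * Real.pi * (i:ℝ) := rfl
  have exj : xt θ j = θ + 2 * Real.pi * (j:ℝ) := rfl
  have exmj : xt θ (-j) = θ - 2 * Real.pi * (j:ℝ) := by unfold xt; push_cast; ring
  have hxi : 0 < xt θ i := by rw [exi]; positivity
  have hd1 : (0:ℝ) ≤ xt θ j - xt θ i := by rw [exi, exj]; nlinarith
  have hd : xt θ j - xt θ i ≤ xt θ i - xt θ (-j) := by rw [exi, exj, exmj]; nlinarith
  have hq2 : 0 < xt θ i * (2 * Real.pi * (j:ℝ) - θ) := by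
    apply mul_pos hxi; nlinarith
  have hq : xt θ i * (2 * Real.pi * (j:ℝ) - θ) ≤ xt θ i * xt θ j := by
    rw [exj]; nlinarith
  have key := core_le (2*p+3) hd1 hd hq2 hq
  have esq : (xt θ i - xt θ j) ^ 2 = (xt θ j - xt θ i) ^ 2 := by ring
  rw [esq]
  linarith

lemma lemC {θ : ℝ} (hθ : θ ∈ Set.Ioo (0:ℝ) Real.pi) (p : ℕ) (i j : ℤ)
    (hij : i < j) (hj : j ≤ -1) : 0 ≤ Gf θ p (i, j) + Gf θ p (-1 - i, j) := by
  obtain ⟨hθ1, hθ2⟩ := hθ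
  have hπ := Real.pi_gt_three
  have hjr : (j:ℝ) ≤ -1 := by exact_mod_cast hj
  have hij' : (i:ℝ) + 1 ≤ (j:ℝ) := by exact_mod_cast hij
  have hodd : Odd (2*p+3) := ⟨p+1, by ring⟩
  rw [Gf_eq ⟨hθ1, hθ2⟩, Gf_eq ⟨hθ1, hθ2⟩]
  dsimp only
  have exi : xt θ i = θ + 2 * Real.pi * (i:ℝ) := rfl
  have exj : xt θ j = θ + 2 * Real.pi * (j:ℝ) := rfl
  have exm : xt θ (-1 - i) = θ - 2 * Real.pi * ((i:ℝ) + 1) := by unfold xt; push_cast; ring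
  have hxj : xt θ j < 0 := by rw [exj]; nlinarith
  have hxi : xt θ i < 0 := by rw [exi]; nlinarith
  have hxm : 0 < xt θ (-1 - i) := by rw [exm]; nlinarith
  have e1 : xt θ i * xt θ j = (-(xt θ i)) * (-(xt θ j)) := by ring
  have e2 : xt θ (-1 - i) * xt θ j = -(xt θ (-1 - i) * (-(xt θ j))) := by ring
  rw [e1, e2, Odd.neg_pow hodd, inv_neg]
  have hd1 : (0:ℝ) ≤ xt θ j - xt θ i := by rw [exi, exj]; nlinarith
  have hd : xt θ j - xt θ i ≤ xt θ (-1 - i) - xt θ j := by rw [exi, exj, exm]; nlinarith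
  have hq2 : 0 < xt θ (-1 - i) * (-(xt θ j)) := mul_pos hxm (by linarith)
  have hq : xt θ (-1 - i) * (-(xt θ j)) ≤ (-(xt θ i)) * (-(xt θ j)) := by
    have hle : xt θ (-1 - i) ≤ -(xt θ i) := by rw [exi, exm]; nlinarith
    nlinarith
  have key := core_le (2*p+3) hd1 hd hq2 hq
  have esq1 : (xt θ i - xt θ j) ^ 2 = (xt θ j - xt θ i) ^ 2 := by ring
  have esq2 : (xt θ (-1 - i) - xt θ j) ^ 2 = (xt θ (-1 - i) - xt θ j) ^ 2 := rfl
  rw [esq1]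
  linarith

lemma Gf_pair_nonneg {θ : ℝ} (hθ : θ ∈ Set.Ioo (0:ℝ) Real.pi) (p : ℕ) (z : ℤ × ℤ) :
    0 ≤ Gf θ p z + Gf θ p (sig z) := by
  rcases z with ⟨i, j⟩
  rw [sig_apply]
  split_ifs with h1 h2 h3 h4
  · rcases h1.2 with h | h
    · exact lemA hθ p i j h1.1 h
    · have := lemA hθ p i (-j) h1.1 h
      rw [neg_neg] at this
      linarith
  · rw [Gf_swap θ p j (-i), Gf_swap θ p j i]
    rcases h2.2 with h | h
    · exact lemA hθ p j i h2.1 h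
    · have := lemA hθ p j (-i) h2.1 h
      rw [neg_neg] at this
      linarith
  · rcases h3.2 with h | h
    · exact lemC hθ p i j h h3.1
    · have h' : (-1 - i) < j := by omega
      have := lemC hθ p (-1 - i) j h' h3.1
      have e : (-1 - (-1 - i)) = i := by ring
      rw [e] at this
      linarith
  · rw [Gf_swap θ p (-1 - j) i, Gf_swap θ p j i]
    rcases h4.2 with h | h
    · exact lemC hθ p j i h h4.1
    · have h' : (-1 - j) < i := by omega
      have := lemC hθ p (-1 - j) i h' h4.1
      have e : (-1 - (-1 - j)) = j := by ring
      rw [e] at this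
      linarith
  · have hij : i = j := sig_diag (z := (i, j)) h1 h2 h3 h4
    subst hij
    rw [Gf_eq hθ]
    dsimp only
    rw [sub_self]
    simp

lemma Gf_pair_pos {θ : ℝ} (hθ : θ ∈ Set.Ioo (0:ℝ) Real.pi) (p : ℕ) :
    0 < Gf θ p (0, 1) + Gf θ p (0, -1) := by
  obtain ⟨hθ1, hθ2⟩ := hθ
  have hπ := Real.pi_gt_three
  have hodd : Odd (2*p+3) := ⟨p+1, by ring⟩
  rw [Gf_eq ⟨hθ1, hθ2⟩, Gf_eq ⟨hθ1, hθ2⟩]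
  dsimp only
  have ex0 : xt θ 0 = θ := by unfold xt; push_cast; ring
  have ex1 : xt θ 1 = θ + 2 * Real.pi := by unfold xt; push_cast; ring
  have exm1 : xt θ (-1) = θ - 2 * Real.pi := by unfold xt; push_cast; ring
  have e2 : xt θ 0 * xt θ (-1) = -(θ * (2 * Real.pi - θ)) := by
    rw [ex0, exm1]; ring
  rw [e2, Odd.neg_pow hodd, inv_neg]
  have e1 : xt θ 0 * xt θ 1 = θ * (2 * Real.pi + θ) := by rw [ex0, ex1]; ring
  rw [e1]
  have esq1 : (xt θ 0 - xt θ 1) ^ 2 = (2 * Real.pi) ^ 2 := by rw [ex0, ex1]; ring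
  have esq2 : (xt θ 0 - xt θ (-1)) ^ 2 = (2 * Real.pi) ^ 2 := by rw [ex0, exm1]; ring
  rw [esq1, esq2]
  have hq2 : 0 < θ * (2 * Real.pi - θ) := by apply mul_pos hθ1; nlinarith
  have hq : θ * (2 * Real.pi - θ) < θ * (2 * Real.pi + θ) := by nlinarith
  have key := core_lt (2*p+3) (by omega) (by positivity : (0:ℝ) < 2 * Real.pi) hq2 hq
  linarith

lemma summable_norm_aux {θ : ℝ} (hθ : θ ∈ Set.Ioo (0:ℝ) Real.pi) (k : ℕ) (hk : 2 ≤ k) :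
    Summable fun j : ℤ => ‖((θ + 2 * Real.pi * (j : ℝ)) ^ k)⁻¹‖ := by
  obtain ⟨hθ1, hθ2⟩ := hθ
  exact (summable_abs_aux hθ1 hθ2 (self_mem hθ1 hθ2) k hk).congr
    fun j => (Real.norm_eq_abs _).symm

lemma bd_lt {θ : ℝ} (hθ : θ ∈ Set.Ioo (0:ℝ) Real.pi) (p : ℕ) (hp : 1 ≤ p) :
    Sk (2*p+1) θ * Sk (2*p+3) θ < Sk (2*p+2) θ ^ 2 := by
  obtain ⟨hθ1, hθ2⟩ := hθ
  have hθm : θ ∈ Set.Ioo (0:ℝ) Real.pi := ⟨hθ1, hθ2⟩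
  set B : ℤ → ℝ := fun j => ((θ + 2 * Real.pi * (j : ℝ)) ^ (2*p+1))⁻¹ with hBdef
  set C : ℤ → ℝ := fun j => ((θ + 2 * Real.pi * (j : ℝ)) ^ (2*p+2))⁻¹ with hCdef
  set D : ℤ → ℝ := fun j => ((θ + 2 * Real.pi * (j : ℝ)) ^ (2*p+3))⁻¹ with hDdef
  have hBn : Summable fun j => ‖B j‖ := summable_norm_aux hθm _ (by omega)
  have hCn : Summable fun j => ‖C j‖ := summable_norm_aux hθm _ (by omega)
  have hDn : Summable fun j => ‖D j‖ := summable_norm_aux hθm _ (by omega)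
  have hCC : Sk (2*p+2) θ ^ 2 = ∑' z : ℤ × ℤ, C z.1 * C z.2 := by
    rw [sq]
    exact tsum_mul_tsum_of_summable_norm hCn hCn
  have hBD : Sk (2*p+1) θ * Sk (2*p+3) θ = ∑' z : ℤ × ℤ, B z.1 * D z.2 :=
    tsum_mul_tsum_of_summable_norm hBn hDn
  have hsumCC : Summable fun z : ℤ × ℤ => C z.1 * C z.2 :=
    summable_mul_of_summable_norm hCn hCn
  have hsumBD : Summable fun z : ℤ × ℤ => B z.1 * D z.2 :=
    summable_mul_of_summable_norm hBn hDn
  have hsumDB : Summable fun z : ℤ × ℤ => B z.2 * D z.1 := by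
    have := summable_mul_of_summable_norm hDn hBn
    exact this.congr fun z => mul_comm _ _
  set H : ℤ × ℤ → ℝ := fun z => C z.1 * C z.2 - B z.1 * D z.2 with hHdef
  have hHsum : Summable H := hsumCC.sub hsumBD
  have hdiff : Sk (2*p+2) θ ^ 2 - Sk (2*p+1) θ * Sk (2*p+3) θ = ∑' z, H z := by
    rw [hCC, hBD, Summable.tsum_sub hsumCC hsumBD]
  have hGf : ∀ z : ℤ × ℤ, Gf θ p z = H z + H (z.2, z.1) := by
    intro z
    simp only [hHdef, Gf, xt, hBdef, hCdef, hDdef]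
    ring
  have hswap : ∑' z : ℤ × ℤ, H (z.2, z.1) = ∑' z, H z := by
    have h := (Equiv.prodComm ℤ ℤ).tsum_eq H
    simpa only [Equiv.prodComm_apply, Prod.swap] using h
  have hHswapsum : Summable fun z : ℤ × ℤ => H (z.2, z.1) := by
    have h := ((Equiv.prodComm ℤ ℤ).summable_iff (f := H)).2 hHsum
    exact h.congr fun z => rfl
  have hGsum : Summable (Gf θ p) := by
    refine (hHsum.add hHswapsum).congr fun z => (hGf z).symm
  have hGtsum : ∑' z, Gf θ p z = 2 * ∑' z, H z := by
    calc ∑' z, Gf θ p z = ∑' z : ℤ × ℤ, (H z + H (z.2, z.1)) := by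
          exact tsum_congr hGf
      _ = (∑' z, H z) + ∑' z : ℤ × ℤ, H (z.2, z.1) := Summable.tsum_add hHsum hHswapsum
      _ = 2 * ∑' z, H z := by rw [hswap]; ring
  have hsigsum : Summable fun z => Gf θ p (sig z) := by
    have h := (sigE.summable_iff (f := Gf θ p)).2 hGsum
    exact h.congr fun z => rfl
  have hsigtsum : ∑' z, Gf θ p (sig z) = ∑' z, Gf θ p z := by
    have h := sigE.tsum_eq (Gf θ p)
    exact h
  have hsig01 : sig (0, 1) = (0, -1) := by decide
  have hpos : 0 < ∑' z : ℤ × ℤ, (Gf θ p z + Gf θ p (sig z)) := by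
    refine Summable.tsum_pos (hGsum.add hsigsum) (fun z => Gf_pair_nonneg hθm p z) (0, 1) ?_
    rw [hsig01]
    exact Gf_pair_pos hθm p
  rw [Summable.tsum_add hGsum hsigsum, hsigtsum, hGtsum] at hpos
  have : 0 < ∑' z, H z := by linarith
  rw [← hdiff] at this
  linarith

lemma cs_lt {θ : ℝ} (hθ : θ ∈ Set.Ioo (0:ℝ) Real.pi) (p : ℕ) (hp : 1 ≤ p) :
    Sk (2*p+1) θ ^ 2 < Sk (2*p) θ * Sk (2*p+2) θ := by
  obtain ⟨hθ1, hθ2⟩ := hθ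
  have hθm : θ ∈ Set.Ioo (0:ℝ) Real.pi := ⟨hθ1, hθ2⟩
  have hπ := Real.pi_gt_three
  set A : ℤ → ℝ := fun j => ((θ + 2 * Real.pi * (j : ℝ)) ^ (2*p))⁻¹ with hAdef
  set B : ℤ → ℝ := fun j => ((θ + 2 * Real.pi * (j : ℝ)) ^ (2*p+1))⁻¹ with hBdef
  set C : ℤ → ℝ := fun j => ((θ + 2 * Real.pi * (j : ℝ)) ^ (2*p+2))⁻¹ with hCdef
  have hAn : Summable fun j => ‖A j‖ := summable_norm_aux hθm _ (by omega)
  have hBn : Summable fun j => ‖B j‖ := summable_norm_aux hθm _ (by omega)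
  have hCn : Summable fun j => ‖C j‖ := summable_norm_aux hθm _ (by omega)
  have hAC : Sk (2*p) θ * Sk (2*p+2) θ = ∑' z : ℤ × ℤ, A z.1 * C z.2 :=
    tsum_mul_tsum_of_summable_norm hAn hCn
  have hBB : Sk (2*p+1) θ ^ 2 = ∑' z : ℤ × ℤ, B z.1 * B z.2 := by
    rw [sq]; exact tsum_mul_tsum_of_summable_norm hBn hBn
  have hsumAC : Summable fun z : ℤ × ℤ => A z.1 * C z.2 :=
    summable_mul_of_summable_norm hAn hCn
  have hsumBB : Summable fun z : ℤ × ℤ => B z.1 * B z.2 :=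
    summable_mul_of_summable_norm hBn hBn
  set H : ℤ × ℤ → ℝ := fun z => A z.1 * C z.2 - B z.1 * B z.2 with hHdef
  have hHsum : Summable H := hsumAC.sub hsumBB
  have hdiff : Sk (2*p) θ * Sk (2*p+2) θ - Sk (2*p+1) θ ^ 2 = ∑' z, H z := by
    rw [hAC, hBB, Summable.tsum_sub hsumAC hsumBB]
  have hswap : ∑' z : ℤ × ℤ, H (z.2, z.1) = ∑' z, H z := by
    have h := (Equiv.prodComm ℤ ℤ).tsum_eq H
    simpa only [Equiv.prodComm_apply, Prod.swap] using h
  have hHswapsum : Summable fun z : ℤ × ℤ => H (z.2, z.1) := by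
    have h := ((Equiv.prodComm ℤ ℤ).summable_iff (f := H)).2 hHsum
    exact h.congr fun z => rfl
  have hsq : ∀ z : ℤ × ℤ, H z + H (z.2, z.1)
      = ((xt θ z.1 ^ p * xt θ z.2 ^ (p+1))⁻¹ - (xt θ z.2 ^ p * xt θ z.1 ^ (p+1))⁻¹) ^ 2 := by
    intro z
    have h := id_cs p (xt_ne hθm z.1) (xt_ne hθm z.2)
    simp only [hHdef, hAdef, hBdef, hCdef]
    rw [← h]
    unfold xt
    ring
  have hwit : 0 < H (0, 1) + H ((0,1).2, (0,1).1) := by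
    rw [hsq]
    have ex0 : xt θ 0 = θ := by unfold xt; push_cast; ring
    have ex1 : xt θ 1 = θ + 2 * Real.pi := by unfold xt; push_cast; ring
    set s : ℝ := (xt θ 0 ^ p * xt θ 1 ^ (p+1))⁻¹ - (xt θ 1 ^ p * xt θ 0 ^ (p+1))⁻¹ with hsdef
    have hx0 : (0:ℝ) < xt θ 0 := by rw [ex0]; positivity
    have hx1 : (0:ℝ) < xt θ 1 := by rw [ex1]; positivity
    have hs : s ≠ 0 := by
      rw [hsdef]
      intro h
      have h2 : (xt θ 0 ^ p * xt θ 1 ^ (p+1))⁻¹ = (xt θ 1 ^ p * xt θ 0 ^ (p+1))⁻¹ := by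
        linarith [sub_eq_zero.1 h]
      have h3 : xt θ 0 ^ p * xt θ 1 ^ (p+1) = xt θ 1 ^ p * xt θ 0 ^ (p+1) :=
        inv_inj.1 h2
      rw [pow_succ, pow_succ] at h3
      have h4 : xt θ 0 ^ p * xt θ 1 ^ p * xt θ 1 = xt θ 0 ^ p * xt θ 1 ^ p * xt θ 0 := by
        linarith [h3]
      have h5 : xt θ 1 = xt θ 0 :=
        mul_left_cancel₀ (by positivity) h4
      rw [ex0, ex1] at h5
      linarith
    have h20 : s ^ 2 ≠ 0 := pow_ne_zero 2 hs
    exact lt_of_le_of_ne (sq_nonneg s) (Ne.symm h20)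
  have hpos : 0 < ∑' z : ℤ × ℤ, (H z + H (z.2, z.1)) := by
    refine Summable.tsum_pos (hHsum.add hHswapsum) (fun z => ?_) (0, 1) hwit
    rw [hsq]
    exact sq_nonneg _
  rw [Summable.tsum_add hHsum hHswapsum, hswap] at hpos
  have : 0 < ∑' z, H z := by linarith
  rw [← hdiff] at this
  linarith

lemma cos_lt_one' {t : ℝ} (ht : t ∈ Set.Ioo (0:ℝ) Real.pi) : Real.cos t < 1 := by
  obtain ⟨ht1, ht2⟩ := ht
  have h := Real.strictAntiOn_cos (Set.left_mem_Icc.2 Real.pi_pos.le)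
    ⟨ht1.le, ht2.le⟩ ht1
  simpa using h


/-- For every `p ≥ 1` and `θ ∈ (0,π)`, the function
`t ↦ C_p(t)²/(M_p(t)·B_p(t))` is differentiable at `θ` with strictly positive
derivative; in particular it is strictly increasing on `(0,π)`. -/
theorem I1p_pos (p : ℕ) (hp : 1 ≤ p) :
    (∀ θ ∈ Set.Ioo (0 : ℝ) Real.pi,
        DifferentiableAt ℝ (fun t : ℝ => Cp p t ^ 2 / (Mp p t * Bp p t)) θ ∧
        0 < deriv (fun t : ℝ => Cp p t ^ 2 / (Mp p t * Bp p t)) θ) ∧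
    StrictMonoOn (fun t : ℝ => Cp p t ^ 2 / (Mp p t * Bp p t))
      (Set.Ioo (0 : ℝ) Real.pi) := by

  set φ : ℝ → ℝ := fun t => -(Sk (2*p+1) t ^ 2 / (Sk (2*p) t * Sk (2*p+2) t)) with hφdef
  have hApos : ∀ t ∈ Set.Ioo (0:ℝ) Real.pi, 0 < Sk (2*p) t := by
    intro t ht
    exact Sk_even_pos ht.1 ht.2 p hp
  have hCpos : ∀ t ∈ Set.Ioo (0:ℝ) Real.pi, 0 < Sk (2*p+2) t := by
    intro t ht
    have h := Sk_even_pos ht.1 ht.2 (p+1) (by omega)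
    have e : 2*(p+1) = 2*p+2 := by ring
    rwa [e] at h
  have heq : ∀ t ∈ Set.Ioo (0:ℝ) Real.pi,
      Cp p t ^ 2 / (Mp p t * Bp p t) = φ t := by
    intro t ht
    have hK : (0:ℝ) < 2 - 2 * Real.cos t := by
      have := cos_lt_one' ht
      linarith
    have hKne : (2 - 2 * Real.cos t) ^ (p+1) ≠ 0 := pow_ne_zero _ (ne_of_gt hK)
    have hA := hApos t ht
    have hC := hCpos t ht
    show (-(2 - 2 * Real.cos t) ^ (p + 1) * Sk (2*p+1) t) ^ 2 /
        (((2 - 2 * Real.cos t) ^ (p + 1) * Sk (2*p+2) t) *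
          (-(2 - 2 * Real.cos t) ^ (p + 1) * Sk (2*p) t))
        = -(Sk (2*p+1) t ^ 2 / (Sk (2*p) t * Sk (2*p+2) t))
    generalize (2 - 2 * Real.cos t) ^ (p + 1) = K at hKne ⊢
    field_simp
  have heq' : ∀ θ ∈ Set.Ioo (0:ℝ) Real.pi,
      (fun t : ℝ => Cp p t ^ 2 / (Mp p t * Bp p t)) =ᶠ[nhds θ] φ := by
    intro θ hθ
    exact Filter.eventuallyEq_of_mem (isOpen_Ioo.mem_nhds hθ) heq
  have main : ∀ θ ∈ Set.Ioo (0 : ℝ) Real.pi,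
      DifferentiableAt ℝ (fun t : ℝ => Cp p t ^ 2 / (Mp p t * Bp p t)) θ ∧
      0 < deriv (fun t : ℝ => Cp p t ^ 2 / (Mp p t * Bp p t)) θ := by
    intro θ hθ
    obtain ⟨hθ1, hθ2⟩ := hθ
    have hθm : θ ∈ Set.Ioo (0:ℝ) Real.pi := ⟨hθ1, hθ2⟩
    set A := Sk (2*p) θ with hA
    set B := Sk (2*p+1) θ with hB
    set C := Sk (2*p+2) θ with hC
    set D := Sk (2*p+3) θ with hD
    have hApos' : 0 < A := hApos θ hθm
    have hCpos' : 0 < C := hCpos θ hθm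
    have hBpos' : 0 < B := Sk_odd_pos hθ1 hθ2 p hp
    have hcs := cs_lt hθm p hp
    have hbd := bd_lt hθm p hp
    have ha' : HasDerivAt (fun t => Sk (2*p) t) (-((2*p : ℕ) : ℝ) * Sk (2*p+1) θ) θ :=
      hasDerivAt_Sk hθ1 hθ2 (2*p) (by omega)
    have hb' : HasDerivAt (fun t => Sk (2*p+1) t) (-((2*p+1 : ℕ) : ℝ) * Sk (2*p+2) θ) θ :=
      hasDerivAt_Sk hθ1 hθ2 (2*p+1) (by omega)
    have hc' : HasDerivAt (fun t => Sk (2*p+2) t) (-((2*p+2 : ℕ) : ℝ) * Sk (2*p+3) θ) θ :=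
      hasDerivAt_Sk hθ1 hθ2 (2*p+2) (by omega)
    have hnum : HasDerivAt (fun t => Sk (2*p+1) t ^ 2)
        ((2:ℕ) * Sk (2*p+1) θ ^ 1 * (-((2*p+1 : ℕ) : ℝ) * Sk (2*p+2) θ)) θ := hb'.pow 2
    have hden : HasDerivAt (fun t => Sk (2*p) t * Sk (2*p+2) t)
        ((-((2*p : ℕ) : ℝ) * Sk (2*p+1) θ) * Sk (2*p+2) θ
          + Sk (2*p) θ * (-((2*p+2 : ℕ) : ℝ) * Sk (2*p+3) θ)) θ := ha'.mul hc'
    have hdenne : Sk (2*p) θ * Sk (2*p+2) θ ≠ 0 := ne_of_gt (mul_pos hApos' hCpos')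
    have hdiv := (hnum.div hden hdenne).neg
    set Q : ℝ := 2*(2*(p:ℝ)+1)*(A*C^2) - 2*(p:ℝ)*(B^2*C) - (2*(p:ℝ)+2)*(A*(B*D)) with hQ
    have hQpos : 0 < Q := by
      have t1 : B^2*C < (A*C)*C := mul_lt_mul_of_pos_right hcs hCpos'
      have t2 : A*(B*D) < A*C^2 := mul_lt_mul_of_pos_left hbd hApos'
      have c1 : (0:ℝ) ≤ 2*(p:ℝ) := by positivity
      have c2 : (0:ℝ) < 2*(p:ℝ)+2 := by positivity
      have u1 : 2*(p:ℝ)*(B^2*C) ≤ 2*(p:ℝ)*((A*C)*C) := mul_le_mul_of_nonneg_left t1.le c1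
      have u2 : (2*(p:ℝ)+2)*(A*(B*D)) < (2*(p:ℝ)+2)*(A*C^2) := mul_lt_mul_of_pos_left t2 c2
      have hACC : (0:ℝ) < A*C^2 := by positivity
      rw [hQ]
      nlinarith [hACC]
    have hL : HasDerivAt φ (B * Q / (A*C)^2) θ := by
      refine hdiv.congr_deriv ?_
      symm
      rw [hQ, hA, hB, hC, hD]
      push_cast
      field_simp
      ring
    have hderiv_pos : 0 < B * Q / (A*C)^2 := by
      apply div_pos (mul_pos hBpos' hQpos)
      positivity
    have hev := heq' θ hθm
    constructor
    · rw [Filter.EventuallyEq.differentiableAt_iff hev]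
      exact hL.differentiableAt
    · rw [Filter.EventuallyEq.deriv_eq hev, hL.deriv]
      exact hderiv_pos
  refine ⟨main, ?_⟩
  have hconv : Convex ℝ (Set.Ioo (0:ℝ) Real.pi) := convex_Ioo _ _
  have hcont : ContinuousOn (fun t : ℝ => Cp p t ^ 2 / (Mp p t * Bp p t))
      (Set.Ioo (0:ℝ) Real.pi) := fun x hx =>
    ((main x hx).1.continuousAt).continuousWithinAt
  have := strictMonoOn_of_deriv_pos hconv hcont ?_
  · exact this
  · intro x hx
    rw [interior_Ioo] at hx
    exact (main x hx).2
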